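/- Let μ*₁ < μ*₂ and μ̂₁ < μ̂₂ with μ̂₁ < μ*₁ and μ̂₂ > μ*₂. Then F(x) = G_{μ*}(x) - G_{μ̂}(x) is negative for some x > μ̂₂, negative for some x < μ̂₁, and positive for all x ∈ [μ*₁, μ*₂]; consequently, since F has at most 3 zeros, the set {x : F(x) ≥ 0} is a single closed interval [ℓ, r] with ℓ ≤ μ*₁ and r ≥ μ*₂. -/

import Mathlib

open Real

noncomputable def mix2 (ν₁ ν₂ x : ℝ) : ℝ :=
  (1/2) * ((Real.sqrt (2 * π))⁻¹ * Real.exp (-(x - ν₁) ^ 2 / 2))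
  + (1/2) * ((Real.sqrt (2 * π))⁻¹ * Real.exp (-(x - ν₂) ^ 2 / 2))

noncomputable def esum (A B C D α β γ x : ℝ) : ℝ :=
  A + B * Real.exp (β * x) - C * Real.exp (α * x) - D * Real.exp (γ * x)

lemma esum_hasDerivAt (A B C D α β γ x : ℝ) :
    HasDerivAt (esum A B C D α β γ)
      (B * β * Real.exp (β * x) - C * α * Real.exp (α * x)
        - D * γ * Real.exp (γ * x)) x := by
  have h1 : HasDerivAt (fun x : ℝ => B * Real.exp (β * x)) (B * β * Real.exp (β * x)) x := by
    have := (((hasDerivAt_id x).const_mul β).exp).const_mul B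
    refine this.congr_deriv ?_
    simp only [id_eq]
    ring
  have h2 : HasDerivAt (fun x : ℝ => C * Real.exp (α * x)) (C * α * Real.exp (α * x)) x := by
    have := (((hasDerivAt_id x).const_mul α).exp).const_mul C
    refine this.congr_deriv ?_
    simp only [id_eq]
    ring
  have h3 : HasDerivAt (fun x : ℝ => D * Real.exp (γ * x)) (D * γ * Real.exp (γ * x)) x := by
    have := (((hasDerivAt_id x).const_mul γ).exp).const_mul D
    refine this.congr_deriv ?_
    simp only [id_eq]
    ring
  have := (((hasDerivAt_const x A).add h1).sub h2).sub h3
  refine this.congr_deriv ?_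
  ring

lemma esum_continuous (A B C D α β γ : ℝ) : Continuous (esum A B C D α β γ) := by
  unfold esum
  fun_prop

set_option maxHeartbeats 1000000 in
/-- The exponential sum is strictly unimodal and negative far out on both sides. -/
lemma esum_structure (A B C D α β γ : ℝ) (hA : 0 < A) (hB : 0 < B) (hC : 0 < C)
    (hD : 0 < D) (hα : α < 0) (hβ : 0 < β) (hβγ : β < γ) :
    ∃ x₀ u v : ℝ, u ≤ x₀ ∧ x₀ ≤ v ∧
      StrictMonoOn (esum A B C D α β γ) (Set.Iic x₀) ∧
      StrictAntiOn (esum A B C D α β γ) (Set.Ici x₀) ∧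
      esum A B C D α β γ u < 0 ∧ esum A B C D α β γ v < 0 := by
  have hγ : 0 < γ := hβ.trans hβγ
  set p : ℝ → ℝ := fun x =>
    B * β * Real.exp ((β - γ) * x) + C * (-α) * Real.exp ((α - γ) * x) - D * γ with hp
  have hCα : 0 < C * (-α) := mul_pos hC (by linarith)
  have hBβ : 0 < B * β := mul_pos hB hβ
  have hDγ : 0 < D * γ := mul_pos hD hγ
  -- derivative of esum is p x * exp (γ x)
  have hderiv : ∀ x : ℝ, B * β * Real.exp (β * x) - C * α * Real.exp (α * x)
      - D * γ * Real.exp (γ * x) = p x * Real.exp (γ * x) := by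
    intro x
    have e : ∀ c : ℝ, Real.exp ((c - γ) * x) * Real.exp (γ * x) = Real.exp (c * x) := by
      intro c; rw [← Real.exp_add]; ring_nf
    simp only [hp]
    linear_combination (-(B * β)) * e β + (C * α) * e α
  have hpanti : StrictAnti p := by
    intro a b hab
    have h1 : Real.exp ((β - γ) * b) < Real.exp ((β - γ) * a) := by
      apply Real.exp_lt_exp.mpr; nlinarith
    have h2 : Real.exp ((α - γ) * b) < Real.exp ((α - γ) * a) := by
      apply Real.exp_lt_exp.mpr; nlinarith
    simp only [hp]
    nlinarith
  -- p is positive somewhere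
  set x₁ : ℝ := Real.log ((D * γ + 1) / (C * (-α))) / (α - γ) with hx₁def
  have hx₁ : 0 < p x₁ := by
    have hαγ : α - γ ≠ 0 := by linarith
    have ht : (0:ℝ) < (D * γ + 1) / (C * (-α)) := by positivity
    have : Real.exp ((α - γ) * x₁) = (D * γ + 1) / (C * (-α)) := by
      rw [hx₁def, mul_div_cancel₀ _ hαγ, Real.exp_log ht]
    simp only [hp, this]
    have hE : 0 < Real.exp ((β - γ) * x₁) := Real.exp_pos _
    have : C * (-α) * ((D * γ + 1) / (C * (-α))) = D * γ + 1 := by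
      rw [mul_comm, div_mul_cancel₀ _ (ne_of_gt hCα)]
    nlinarith
  -- p is negative somewhere
  set q₁ : ℝ := Real.log ((D * γ / 2) / (B * β)) / (β - γ) with hq₁def
  set q₂ : ℝ := Real.log ((D * γ / 2) / (C * (-α))) / (α - γ) with hq₂def
  set x₂ : ℝ := max q₁ q₂ + 1 with hx₂def
  have hx₂ : p x₂ < 0 := by
    have hβγ' : β - γ < 0 := by linarith
    have hαγ' : α - γ < 0 := by linarith
    have h1 : (β - γ) * x₂ < Real.log ((D * γ / 2) / (B * β)) := by
      have : q₁ < x₂ := by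
        have := le_max_left q₁ q₂; simp only [hx₂def]; linarith
      calc (β - γ) * x₂ < (β - γ) * q₁ := by nlinarith
        _ = Real.log ((D * γ / 2) / (B * β)) := by
            rw [hq₁def, mul_div_cancel₀ _ (ne_of_lt hβγ')]
    have h2 : (α - γ) * x₂ < Real.log ((D * γ / 2) / (C * (-α))) := by
      have : q₂ < x₂ := by
        have := le_max_right q₁ q₂; simp only [hx₂def]; linarith
      calc (α - γ) * x₂ < (α - γ) * q₂ := by nlinarith
        _ = Real.log ((D * γ / 2) / (C * (-α))) := by
            rw [hq₂def, mul_div_cancel₀ _ (ne_of_lt hαγ')]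
    have e1 : Real.exp ((β - γ) * x₂) < (D * γ / 2) / (B * β) := by
      have := Real.exp_lt_exp.mpr h1
      rwa [Real.exp_log (by positivity)] at this
    have e2 : Real.exp ((α - γ) * x₂) < (D * γ / 2) / (C * (-α)) := by
      have := Real.exp_lt_exp.mpr h2
      rwa [Real.exp_log (by positivity)] at this
    have b1 : B * β * Real.exp ((β - γ) * x₂) < D * γ / 2 := by
      rw [lt_div_iff₀ hBβ] at e1; nlinarith
    have b2 : C * (-α) * Real.exp ((α - γ) * x₂) < D * γ / 2 := by
      rw [lt_div_iff₀ hCα] at e2; nlinarith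
    simp only [hp]
    nlinarith
  have hx₁₂ : x₁ < x₂ := by
    by_contra h
    push_neg at h
    rcases eq_or_lt_of_le h with h | h
    · rw [h] at hx₂; linarith
    · have := hpanti h; linarith
  have hpcont : Continuous p := by fun_prop
  obtain ⟨x₀, hx₀mem, hpx₀⟩ : ∃ x₀ ∈ Set.Icc x₁ x₂, p x₀ = 0 := by
    have := intermediate_value_Icc' (le_of_lt hx₁₂) hpcont.continuousOn
      (Set.mem_Icc.mpr ⟨le_of_lt hx₂, le_of_lt hx₁⟩)
    obtain ⟨x₀, hmem, hval⟩ := this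
    exact ⟨x₀, hmem, hval⟩
  -- sign of derivative
  have hderivpos : ∀ x < x₀, 0 < B * β * Real.exp (β * x) - C * α * Real.exp (α * x)
      - D * γ * Real.exp (γ * x) := by
    intro x hx
    rw [hderiv]
    have : 0 < p x := by have := hpanti hx; rw [hpx₀] at this; linarith
    positivity
  have hderivneg : ∀ x, x₀ < x → B * β * Real.exp (β * x) - C * α * Real.exp (α * x)
      - D * γ * Real.exp (γ * x) < 0 := by
    intro x hx
    rw [hderiv]
    have hpx : p x < 0 := by have := hpanti hx; rwa [hpx₀] at this
    have := Real.exp_pos (γ * x)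
    nlinarith
  have hmono : StrictMonoOn (esum A B C D α β γ) (Set.Iic x₀) := by
    apply strictMonoOn_of_deriv_pos (convex_Iic x₀)
      (esum_continuous A B C D α β γ).continuousOn
    intro x hx
    rw [interior_Iic] at hx
    rw [(esum_hasDerivAt A B C D α β γ x).deriv]
    exact hderivpos x hx
  have hanti : StrictAntiOn (esum A B C D α β γ) (Set.Ici x₀) := by
    apply strictAntiOn_of_deriv_neg (convex_Ici x₀)
      (esum_continuous A B C D α β γ).continuousOn
    intro x hx
    rw [interior_Ici] at hx
    rw [(esum_hasDerivAt A B C D α β γ x).deriv]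
    exact hderivneg x hx
  -- negative point on the left
  set u : ℝ := min (min x₀ 0) (Real.log ((A + B + 1) / C) / α) - 1 with hudef
  have hu0 : u ≤ 0 := by
    have := min_le_right (min x₀ 0) (Real.log ((A + B + 1) / C) / α)
    have := min_le_right x₀ (0:ℝ)
    have := min_le_left (min x₀ 0) (Real.log ((A + B + 1) / C) / α)
    simp only [hudef]
    have h := le_trans (min_le_left (min x₀ 0) (Real.log ((A + B + 1) / C) / α))
      (min_le_right x₀ 0)
    linarith
  have hux₀ : u ≤ x₀ := by
    have h := le_trans (min_le_left (min x₀ 0) (Real.log ((A + B + 1) / C) / α))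
      (min_le_left x₀ 0)
    simp only [hudef]; linarith
  have hfu : esum A B C D α β γ u < 0 := by
    have hL : u ≤ Real.log ((A + B + 1) / C) / α - 1 := by
      have := min_le_right (min x₀ 0) (Real.log ((A + B + 1) / C) / α)
      simp only [hudef]; linarith
    have hαu : Real.log ((A + B + 1) / C) < α * u := by
      have hmul : α * (Real.log ((A + B + 1) / C) / α - 1) ≤ α * u :=
        mul_le_mul_of_nonpos_left hL (le_of_lt hα)
      have hαne : α ≠ 0 := ne_of_lt hα
      have heq : α * (Real.log ((A + B + 1) / C) / α - 1)
          = Real.log ((A + B + 1) / C) - α := by field_simp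
      linarith
    have hCe : A + B + 1 < C * Real.exp (α * u) := by
      have := Real.exp_lt_exp.mpr hαu
      rw [Real.exp_log (by positivity), div_lt_iff₀ hC] at this
      linarith [mul_comm C (Real.exp (α * u)), this]
    have hBe : B * Real.exp (β * u) ≤ B := by
      have h1 : Real.exp (β * u) ≤ 1 :=
        Real.exp_le_one_iff.mpr (mul_nonpos_of_nonneg_of_nonpos hβ.le hu0)
      exact mul_le_of_le_one_right hB.le h1
    have hDe : 0 < D * Real.exp (γ * u) := by positivity
    unfold esum
    linarith
  -- negative point on the right
  set v : ℝ := max (max x₀ 0) (Real.log ((A + B + 1) / D) / (γ - β)) + 1 with hvdef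
  have hv0 : 0 ≤ v := by
    have h := le_trans (le_max_right x₀ 0)
      (le_max_left (max x₀ 0) (Real.log ((A + B + 1) / D) / (γ - β)))
    simp only [hvdef]; linarith
  have hvx₀ : x₀ ≤ v := by
    have h := le_trans (le_max_left x₀ 0)
      (le_max_left (max x₀ 0) (Real.log ((A + B + 1) / D) / (γ - β)))
    simp only [hvdef]; linarith
  have hfv : esum A B C D α β γ v < 0 := by
    have hγβ : 0 < γ - β := by linarith
    have hL : Real.log ((A + B + 1) / D) / (γ - β) + 1 ≤ v := by
      have := le_max_right (max x₀ 0) (Real.log ((A + B + 1) / D) / (γ - β))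
      simp only [hvdef]; linarith
    have hγv : Real.log ((A + B + 1) / D) < (γ - β) * v := by
      have h1 : (γ - β) * (Real.log ((A + B + 1) / D) / (γ - β) + 1) ≤ (γ - β) * v :=
        mul_le_mul_of_nonneg_left hL (le_of_lt hγβ)
      have h2 : (γ - β) * (Real.log ((A + B + 1) / D) / (γ - β) + 1)
          = Real.log ((A + B + 1) / D) + (γ - β) := by
        field_simp
      linarith
    have hDe : (A + B + 1) < D * Real.exp ((γ - β) * v) := by
      have := Real.exp_lt_exp.mpr hγv
      rw [Real.exp_log (by positivity), div_lt_iff₀ hD] at this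
      linarith [mul_comm D (Real.exp ((γ - β) * v)), this]
    have hsplit : Real.exp (γ * v) = Real.exp ((γ - β) * v) * Real.exp (β * v) := by
      rw [← Real.exp_add]; ring_nf
    have hBe : 1 ≤ Real.exp (β * v) := Real.one_le_exp (by positivity)
    have hCe : 0 < C * Real.exp (α * v) := by positivity
    have hEv : 0 < Real.exp (β * v) := Real.exp_pos _
    have key : (A + B + 1) * Real.exp (β * v) < D * Real.exp ((γ - β) * v) * Real.exp (β * v) :=
      mul_lt_mul_of_pos_right hDe hEv
    have hA1 : A ≤ A * Real.exp (β * v) := le_mul_of_one_le_right hA.le hBe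
    unfold esum
    rw [hsplit]
    nlinarith [key, hA1, hCe, hEv]
  exact ⟨x₀, u, v, hux₀, hvx₀, hmono, hanti, hfu, hfv⟩

/-- For a continuous strictly unimodal function negative outside and positive on a
nonempty interval, the nonnegativity set is a closed interval containing it. -/
lemma interval_of_unimodal (f : ℝ → ℝ) (hf : Continuous f) (x₀ u v a b : ℝ)
    (hmono : StrictMonoOn f (Set.Iic x₀)) (hanti : StrictAntiOn f (Set.Ici x₀))
    (hu : u ≤ x₀) (hfu : f u < 0) (hv : x₀ ≤ v) (hfv : f v < 0)
    (hab : a ≤ b) (hpos : ∀ x ∈ Set.Icc a b, 0 < f x) :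
    ∃ ℓ r : ℝ, ℓ ≤ a ∧ b ≤ r ∧ {x : ℝ | 0 ≤ f x} = Set.Icc ℓ r := by
  have hmax : ∀ y : ℝ, f y ≤ f x₀ := by
    intro y
    rcases le_total y x₀ with h | h
    · exact hmono.monotoneOn (Set.mem_Iic.mpr h) (Set.mem_Iic.mpr le_rfl) h
    · exact hanti.antitoneOn (Set.mem_Ici.mpr le_rfl) (Set.mem_Ici.mpr h) h
  have hfx₀ : 0 < f x₀ := lt_of_lt_of_le (hpos a ⟨le_rfl, hab⟩) (hmax a)
  obtain ⟨ℓ, hℓmem, hℓ0⟩ : ∃ ℓ ∈ Set.Icc u x₀, f ℓ = 0 := by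
    have := intermediate_value_Icc hu hf.continuousOn
      (Set.mem_Icc.mpr ⟨le_of_lt hfu, le_of_lt hfx₀⟩)
    obtain ⟨ℓ, h1, h2⟩ := this
    exact ⟨ℓ, h1, h2⟩
  obtain ⟨r, hrmem, hr0⟩ : ∃ r ∈ Set.Icc x₀ v, f r = 0 := by
    have := intermediate_value_Icc' hv hf.continuousOn
      (Set.mem_Icc.mpr ⟨le_of_lt hfv, le_of_lt hfx₀⟩)
    obtain ⟨r, h1, h2⟩ := this
    exact ⟨r, h1, h2⟩
  have hℓx₀ : ℓ ≤ x₀ := hℓmem.2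
  have hx₀r : x₀ ≤ r := hrmem.1
  have hset : {x : ℝ | 0 ≤ f x} = Set.Icc ℓ r := by
    ext x
    simp only [Set.mem_setOf_eq, Set.mem_Icc]
    constructor
    · intro hx
      constructor
      · by_contra h
        push_neg at h
        have : f x < f ℓ := hmono (Set.mem_Iic.mpr (by linarith)) (Set.mem_Iic.mpr hℓx₀) h
        rw [hℓ0] at this; linarith
      · by_contra h
        push_neg at h
        have : f x < f r := hanti (Set.mem_Ici.mpr hx₀r) (Set.mem_Ici.mpr (by linarith)) h
        rw [hr0] at this; linarith
    · rintro ⟨h1, h2⟩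
      rcases le_total x x₀ with h | h
      · have : f ℓ ≤ f x := hmono.monotoneOn (Set.mem_Iic.mpr hℓx₀) (Set.mem_Iic.mpr h) h1
        rw [hℓ0] at this; linarith
      · have : f r ≤ f x := hanti.antitoneOn (Set.mem_Ici.mpr h) (Set.mem_Ici.mpr hx₀r) h2
        rw [hr0] at this; linarith
  have ha : a ∈ Set.Icc ℓ r := by
    rw [← hset]; exact le_of_lt (hpos a ⟨le_rfl, hab⟩)
  have hb : b ∈ Set.Icc ℓ r := by
    rw [← hset]; exact le_of_lt (hpos b ⟨hab, le_rfl⟩)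
  exact ⟨ℓ, r, ha.1, hb.2, hset⟩

/-- Case 3 sign structure of Lemma 3.3: when the generator means straddle the
true means, F = G_{μ*} - G_{μ̂} is negative in both tails, positive between the
true means, and its nonnegativity set is a single closed interval. -/
theorem straddle_sign_structure (μs₁ μs₂ μh₁ μh₂ : ℝ)
    (hs : μs₁ < μs₂) (hh : μh₁ < μh₂) (h₁ : μh₁ < μs₁) (h₂ : μs₂ < μh₂) :
    (∃ x > μh₂, mix2 μs₁ μs₂ x - mix2 μh₁ μh₂ x < 0) ∧
    (∃ x < μh₁, mix2 μs₁ μs₂ x - mix2 μh₁ μh₂ x < 0) ∧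
    (∀ x ∈ Set.Icc μs₁ μs₂, 0 < mix2 μs₁ μs₂ x - mix2 μh₁ μh₂ x) ∧
    (∃ ℓ r : ℝ, ℓ ≤ μs₁ ∧ μs₂ ≤ r ∧
      {x : ℝ | 0 ≤ mix2 μs₁ μs₂ x - mix2 μh₁ μh₂ x} = Set.Icc ℓ r) := by
  have hπ : (0:ℝ) < Real.sqrt (2 * π) := Real.sqrt_pos.mpr (by positivity)
  have hs' : (0:ℝ) < (Real.sqrt (2 * π))⁻¹ := inv_pos.mpr hπ
  set A := Real.exp (-μs₁ ^ 2 / 2) with hAdef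
  set B := Real.exp (-μs₂ ^ 2 / 2) with hBdef
  set C := Real.exp (-μh₁ ^ 2 / 2) with hCdef
  set D := Real.exp (-μh₂ ^ 2 / 2) with hDdef
  set α := μh₁ - μs₁ with hαdef
  set β := μs₂ - μs₁ with hβdef
  set γ := μh₂ - μs₁ with hγdef
  -- key identity
  have hid : ∀ x : ℝ, mix2 μs₁ μs₂ x - mix2 μh₁ μh₂ x
      = (1/2) * (Real.sqrt (2 * π))⁻¹ * Real.exp (μs₁ * x - x ^ 2 / 2)
        * esum A B C D α β γ x := by
    intro x
    have k : ∀ ν : ℝ, Real.exp (-(x - ν) ^ 2 / 2)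
        = Real.exp (μs₁ * x - x ^ 2 / 2) * Real.exp ((ν - μs₁) * x + (-ν ^ 2 / 2)) := by
      intro ν; rw [← Real.exp_add]; ring_nf
    have kA : Real.exp ((μs₁ - μs₁) * x + (-μs₁ ^ 2 / 2)) = A := by
      rw [hAdef]; ring_nf
    have kB : Real.exp ((μs₂ - μs₁) * x + (-μs₂ ^ 2 / 2)) = B * Real.exp (β * x) := by
      rw [hBdef, hβdef, ← Real.exp_add]; ring_nf
    have kC : Real.exp ((μh₁ - μs₁) * x + (-μh₁ ^ 2 / 2)) = C * Real.exp (α * x) := by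
      rw [hCdef, hαdef, ← Real.exp_add]; ring_nf
    have kD : Real.exp ((μh₂ - μs₁) * x + (-μh₂ ^ 2 / 2)) = D * Real.exp (γ * x) := by
      rw [hDdef, hγdef, ← Real.exp_add]; ring_nf
    simp only [mix2, esum]
    rw [k μs₁, k μs₂, k μh₁, k μh₂, kA, kB, kC, kD]
    ring
  have hcpos : ∀ x : ℝ, 0 < (1/2) * (Real.sqrt (2 * π))⁻¹ * Real.exp (μs₁ * x - x ^ 2 / 2) := by
    intro x; positivity
  -- positivity on the middle interval for mix2 difference
  have hmid : ∀ x ∈ Set.Icc μs₁ μs₂, 0 < mix2 μs₁ μs₂ x - mix2 μh₁ μh₂ x := by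
    rintro x ⟨hx1, hx2⟩
    have t1 : Real.exp (-(x - μh₁) ^ 2 / 2) < Real.exp (-(x - μs₁) ^ 2 / 2) := by
      apply Real.exp_lt_exp.mpr
      nlinarith [mul_pos (sub_pos.mpr h₁) (show (0:ℝ) < 2 * x - μs₁ - μh₁ by nlinarith)]
    have t2 : Real.exp (-(x - μh₂) ^ 2 / 2) < Real.exp (-(x - μs₂) ^ 2 / 2) := by
      apply Real.exp_lt_exp.mpr
      nlinarith [mul_pos (sub_pos.mpr h₂) (show (0:ℝ) < μh₂ + μs₂ - 2 * x by nlinarith)]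
    simp only [mix2]
    nlinarith
  -- structure of esum
  obtain ⟨x₀, u, v, hux₀, hvx₀, hmono, hanti, hfu, hfv⟩ :=
    esum_structure A B C D α β γ (Real.exp_pos _) (Real.exp_pos _) (Real.exp_pos _)
      (Real.exp_pos _) (by rw [hαdef]; linarith) (by rw [hβdef]; linarith)
      (by rw [hβdef, hγdef]; linarith)
  have hmidE : ∀ x ∈ Set.Icc μs₁ μs₂, 0 < esum A B C D α β γ x := by
    intro x hx
    have h := hmid x hx
    rw [hid x] at h
    exact (mul_pos_iff_of_pos_left (hcpos x)).mp h
  obtain ⟨ℓ, r, hℓ, hr, hset⟩ := interval_of_unimodal (esum A B C D α β γ)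
    (esum_continuous A B C D α β γ) x₀ u v μs₁ μs₂ hmono hanti hux₀ hfu hvx₀ hfv
    (le_of_lt hs) hmidE
  have hsetF : {x : ℝ | 0 ≤ mix2 μs₁ μs₂ x - mix2 μh₁ μh₂ x} = Set.Icc ℓ r := by
    rw [← hset]
    ext x
    simp only [Set.mem_setOf_eq]
    rw [hid x]
    exact mul_nonneg_iff_of_pos_left (hcpos x)
  have hneg : ∀ x : ℝ, x ∉ Set.Icc ℓ r → mix2 μs₁ μs₂ x - mix2 μh₁ μh₂ x < 0 := by
    intro x hx
    by_contra h
    push_neg at h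
    exact hx (hsetF ▸ h)
  refine ⟨⟨max r μh₂ + 1, ?_, ?_⟩, ⟨min ℓ μh₁ - 1, ?_, ?_⟩, hmid, ℓ, r, hℓ, hr, hsetF⟩
  · have := le_max_right r μh₂; linarith
  · apply hneg
    intro hmem
    have := hmem.2
    have := le_max_left r μh₂
    linarith
  · have := min_le_right ℓ μh₁; linarith
  · apply hneg
    intro hmem
    have := hmem.1
    have := min_le_left ℓ μh₁
    linarith
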